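/- arXiv:1301.6339 — 4 statements merged into one kernel-verified Lean document; each statement's English description precedes it below -/
import Mathlib

section
/- Let X and Y be nonempty finite sets and let W be a classical channel from X to Y, i.e., W(y|x) ≥ 0 and ∑_{y∈Y} W(y|x) = 1 for every x ∈ X. Fix ρ > 0 and set α = 1/(1+ρ). Then the maximum over all probability distributions P on X of (1/ρ)·(−log ∑_{y∈Y} (∑_{x∈X} P(x) W(y|x)^α)^{1/α}) equals the minimum over all probability distributions Q on Y of max_{x∈X} (1/(α−1))·log ∑_{y∈Y} W(y|x)^α Q(y)^{1−α}, the equality being understood in the extended nonnegative reals [0,∞], and both extrema are attained. -/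
open scoped ENNReal

/-- `-log r` as an extended nonnegative real, `+∞` when `r ≤ 0`. -/
noncomputable def negLog (r : ℝ) : ℝ≥0∞ :=
  if r ≤ 0 then ⊤ else ENNReal.ofReal (-Real.log r)

/-- `(α - 1)⁻¹ · log r` as an extended nonnegative real, `+∞` when `r ≤ 0`. -/
noncomputable def renyiTerm (α r : ℝ) : ℝ≥0∞ :=
  if r ≤ 0 then ⊤ else ENNReal.ofReal ((α - 1)⁻¹ * Real.log r)

/-! `F(P) = ∑_y (∑_x P(x) W(y|x)^α)^{1/α}` is continuous on the compact simplex, so it attains its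
minimum at some `P`, and `E₀(ρ)/ρ = -(1/ρ) log F(P)`. Differentiating `F` along the segment from
`P` to a vertex `δ_x` gives the optimality condition `F(P) ≤ ∑_y W(y|x)^α a_y^{1/α - 1}`, where
`a_y = ∑_x P(x) W(y|x)^α`; it says that the tilted output distribution `Q(y) = a_y^{1/α} / F(P)`
satisfies `∑_y W(y|x)^α Q(y)^{1-α} ≥ F(P)^α` for every `x`. Conversely, for any `Q'`, Hölder's
inequality bounds the `P`-average over `x` of `∑_y W(y|x)^α Q'(y)^{1-α}` by `F(P)^α`. As
`r ↦ (α - 1)⁻¹ log r` is decreasing and sends `F(P)^α` to `-(1/ρ) log F(P)`, both extrema equal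
`E₀(ρ)/ρ`. -/

open Set Finset

lemma sum_rpow_mul_rpow_one_sub_le {ι : Type*} (s : Finset ι) {α : ℝ} (hα0 : 0 < α)
    (hα1 : α < 1) {u v : ι → ℝ} (hu : ∀ i, 0 ≤ u i) (hv : ∀ i, 0 ≤ v i) :
    ∑ i ∈ s, u i ^ α * v i ^ (1 - α) ≤ (∑ i ∈ s, u i) ^ α * (∑ i ∈ s, v i) ^ (1 - α) := by
  have hpq : α⁻¹.HolderConjugate (1 - α)⁻¹ :=
    (Real.holderConjugate_iff).2 ⟨(one_lt_inv₀ hα0).2 hα1, by simp⟩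
  have hrpow : ∀ {β : ℝ} (f : ι → ℝ), (∀ i, 0 ≤ f i) → 0 < β →
      ∀ i, |f i ^ β| ^ β⁻¹ = f i := fun f hf hβ i => by
    rw [abs_of_nonneg (Real.rpow_nonneg (hf i) _), Real.rpow_rpow_inv (hf i) hβ.ne']
  simpa only [hrpow u hu hα0, hrpow v hv (sub_pos.2 hα1), one_div, inv_inv] using
    Real.inner_le_Lp_mul_Lq s (fun i => u i ^ α) (fun i => v i ^ (1 - α)) hpq

lemma nonneg_of_hasDerivAt_of_isMinOn_Icc {f : ℝ → ℝ} {f' : ℝ} (hf : HasDerivAt f f' 0)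
    (hmin : IsMinOn f (Icc 0 1) 0) : 0 ≤ f' := by
  have h1 : (1 : ℝ) ∈ posTangentConeAt (Icc (0 : ℝ) 1) 0 := by
    simpa using sub_mem_posTangentConeAt_of_segment_subset (segment_eq_Icc zero_le_one).subset
  simpa using hmin.localize.hasFDerivWithinAt_nonneg hf.hasDerivWithinAt.hasFDerivWithinAt h1

lemma rpow_sub_one_mul_self {a p : ℝ} (ha : 0 ≤ a) (hp : p ≠ 0) : a ^ (p - 1) * a = a ^ p := by
  rcases ha.eq_or_lt with rfl | ha
  · simp [Real.zero_rpow hp]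
  · rw [← Real.rpow_add_one ha.ne']; ring_nf

lemma negLog_le_negLog {r s : ℝ} (hr : 0 < r) (hrs : r ≤ s) : negLog s ≤ negLog r := by
  simp only [negLog, if_neg hr.not_ge, if_neg (hr.trans_le hrs).not_ge]
  exact ENNReal.ofReal_le_ofReal (neg_le_neg (Real.log_le_log hr hrs))

lemma renyiTerm_le_renyiTerm {α r s : ℝ} (hα : α < 1) (hs : 0 < s) (hrs : r ≤ s) :
    renyiTerm α s ≤ renyiTerm α r := by
  by_cases hr : r ≤ 0
  · simp [renyiTerm, hr]
  simp only [renyiTerm, if_neg hr, if_neg hs.not_ge]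
  exact ENNReal.ofReal_le_ofReal <| mul_le_mul_of_nonpos_left
    (Real.log_le_log (not_le.1 hr) hrs) (inv_nonpos.2 (by linarith))

lemma renyiTerm_rpow {α ρ c : ℝ} (hρ : 0 < ρ) (hα : α = 1 / (1 + ρ)) (hc : 0 < c) :
    renyiTerm α (c ^ α) = ENNReal.ofReal (1 / ρ) * negLog c := by
  have hcoeff : (α - 1)⁻¹ * α = -(1 / ρ) := by
    rw [hα]
    field_simp [hρ.ne']
    ring
  simp only [renyiTerm, negLog, if_neg (Real.rpow_pos_of_pos hc α).not_ge, if_neg hc.not_ge,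
    ← ENNReal.ofReal_mul (one_div_nonneg.2 hρ.le), Real.log_rpow hc, ← mul_assoc, hcoeff]
  ring_nf

section

variable {X Y : Type*} [Fintype X] [Fintype Y]

lemma exists_le_sum_mul_of_mem_stdSimplex {P : X → ℝ} (hP : P ∈ stdSimplex ℝ X) (f : X → ℝ) :
    ∃ x, f x ≤ ∑ x', P x' * f x' := by
  obtain ⟨x, -, hx⟩ := exists_min_image univ f
    (nonempty_of_sum_ne_zero (hP.2.symm ▸ one_ne_zero))
  refine ⟨x, ?_⟩
  calc f x = ∑ x', P x' * f x := by rw [← sum_mul, hP.2, one_mul]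
    _ ≤ ∑ x', P x' * f x' :=
      sum_le_sum fun x' _ => mul_le_mul_of_nonneg_left (hx x' (mem_univ _)) (hP.1 x')

theorem sum_rpow_le_sum_mul_rpow_of_isMinOn {p : ℝ} (hp : 1 ≤ p) {A : X → Y → ℝ}
    (hA : ∀ x y, 0 ≤ A x y) {P : X → ℝ} (hP : P ∈ stdSimplex ℝ X)
    (hmin : IsMinOn (fun P => ∑ y, (∑ x, P x * A x y) ^ p) (stdSimplex ℝ X) P) (x₀ : X) :
    ∑ y, (∑ x, P x * A x y) ^ p ≤ ∑ y, A x₀ y * (∑ x, P x * A x y) ^ (p - 1) := by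
  classical
  set a : Y → ℝ := fun y => ∑ x, P x * A x y
  have ha : ∀ y, 0 ≤ a y := fun y => sum_nonneg fun x _ => mul_nonneg (hP.1 x) (hA x y)
  set v : X → ℝ := Pi.single x₀ 1 - P
  have hv : ∀ y, ∑ x, v x * A x y = A x₀ y - a y := fun y => by
    simp [v, sub_mul, Pi.single_apply, a]
  have hderiv : HasDerivAt (fun t : ℝ => ∑ y, (∑ x, (P + t • v) x * A x y) ^ p)
      (∑ y, (A x₀ y - a y) * p * a y ^ (p - 1)) 0 := by
    refine HasDerivAt.fun_sum fun y _ => ?_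
    have hlin : HasDerivAt (fun t : ℝ => ∑ x, (P + t • v) x * A x y) (A x₀ y - a y) 0 := by
      rw [← hv]
      refine HasDerivAt.fun_sum fun x _ => ?_
      simpa using ((hasDerivAt_id (0 : ℝ)).mul_const (v x)).const_add (P x) |>.mul_const (A x y)
    simpa using hlin.rpow_const (Or.inr hp)
  have hsegment : IsMinOn (fun t : ℝ => ∑ y, (∑ x, (P + t • v) x * A x y) ^ p) (Icc 0 1) 0 := by
    intro t ht
    have hmem : P + t • v ∈ stdSimplex ℝ X := by
      convert (convex_stdSimplex ℝ X) hP (single_mem_stdSimplex ℝ x₀) (sub_nonneg.2 ht.2) ht.1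
        (sub_add_cancel 1 t) using 1
      simp only [v, smul_sub, sub_smul, one_smul]
      abel
    simpa using hmin hmem
  have h0 := nonneg_of_hasDerivAt_of_isMinOn_Icc hderiv hsegment
  have hexpand : ∑ y, (A x₀ y - a y) * p * a y ^ (p - 1)
      = p * (∑ y, A x₀ y * a y ^ (p - 1) - ∑ y, a y ^ (p - 1) * a y) := by
    rw [← sum_sub_distrib, mul_sum]
    exact sum_congr rfl fun y _ => by ring
  rw [hexpand, mul_nonneg_iff_of_pos_left (by linarith), sub_nonneg] at h0
  simpa only [rpow_sub_one_mul_self (ha _) (by linarith : p ≠ 0)] using h0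

lemma sum_mul_sum_mul_rpow_le {α : ℝ} (hα0 : 0 < α) (hα1 : α < 1) {A : X → Y → ℝ}
    (hA : ∀ x y, 0 ≤ A x y) {P : X → ℝ} (hP : ∀ x, 0 ≤ P x) {Q : Y → ℝ}
    (hQ : Q ∈ stdSimplex ℝ Y) :
    ∑ x, P x * ∑ y, A x y * Q y ^ (1 - α) ≤ (∑ y, (∑ x, P x * A x y) ^ (1 / α)) ^ α := by
  have ha : ∀ y, 0 ≤ ∑ x, P x * A x y := fun y =>
    sum_nonneg fun x _ => mul_nonneg (hP x) (hA x y)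
  calc ∑ x, P x * ∑ y, A x y * Q y ^ (1 - α)
      = ∑ y, ((∑ x, P x * A x y) ^ (1 / α)) ^ α * Q y ^ (1 - α) := by
        simp only [one_div, Real.rpow_inv_rpow (ha _) hα0.ne', mul_sum, sum_mul]
        rw [sum_comm]
        exact sum_congr rfl fun y _ => sum_congr rfl fun x _ => by ring
    _ ≤ (∑ y, (∑ x, P x * A x y) ^ (1 / α)) ^ α * (∑ y, Q y) ^ (1 - α) :=
        sum_rpow_mul_rpow_one_sub_le _ hα0 hα1 (fun y => Real.rpow_nonneg (ha y) _) hQ.1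
    _ = (∑ y, (∑ x, P x * A x y) ^ (1 / α)) ^ α := by rw [hQ.2, Real.one_rpow, mul_one]

lemma rpow_le_sum_mul_rpow_div {α : ℝ} (hα : α ≠ 0) {a w : Y → ℝ} (ha : ∀ y, 0 ≤ a y)
    (hF : 0 < ∑ y, a y ^ (1 / α))
    (hkkt : ∑ y, a y ^ (1 / α) ≤ ∑ y, w y * a y ^ (1 / α - 1)) :
    (∑ y, a y ^ (1 / α)) ^ α ≤ ∑ y, w y * (a y ^ (1 / α) / ∑ y', a y' ^ (1 / α)) ^ (1 - α) := by
  set F := ∑ y, a y ^ (1 / α)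
  have hterm : ∀ y, (a y ^ (1 / α) / F) ^ (1 - α) = F ^ (α - 1) * a y ^ (1 / α - 1) := by
    intro y
    rw [Real.div_rpow (Real.rpow_nonneg (ha y) _) hF.le, ← Real.rpow_mul (ha y),
      div_eq_mul_inv, ← Real.rpow_neg hF.le, neg_sub, mul_comm]
    congr 2
    field_simp
  calc F ^ α = F ^ (α - 1) * F := by rw [← Real.rpow_add_one hF.ne', sub_add_cancel]
    _ ≤ F ^ (α - 1) * ∑ y, w y * a y ^ (1 / α - 1) :=
        mul_le_mul_of_nonneg_left hkkt (Real.rpow_nonneg hF.le _)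
    _ = ∑ y, w y * (a y ^ (1 / α) / F) ^ (1 - α) := by
        rw [mul_sum]
        exact sum_congr rfl fun y _ => by rw [hterm]; ring

lemma sum_rpow_sum_mul_rpow_pos {W : X → Y → ℝ} (hW : ∀ x y, 0 ≤ W x y)
    (hW1 : ∀ x, ∑ y, W x y = 1) {P : X → ℝ} (hP : P ∈ stdSimplex ℝ X) (α p : ℝ) :
    0 < ∑ y, (∑ x, P x * W x y ^ α) ^ p := by
  obtain ⟨x, -, hx⟩ := exists_ne_zero_of_sum_ne_zero (hP.2.symm ▸ one_ne_zero)
  obtain ⟨y, -, hy⟩ := exists_ne_zero_of_sum_ne_zero ((hW1 x).symm ▸ one_ne_zero)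
  have hterm : ∀ y, 0 ≤ ∑ x, P x * W x y ^ α := fun y =>
    sum_nonneg fun x _ => mul_nonneg (hP.1 x) (Real.rpow_nonneg (hW x y) _)
  have hxy : 0 < P x * W x y ^ α :=
    mul_pos ((hP.1 x).lt_of_ne' hx) (Real.rpow_pos_of_pos ((hW x y).lt_of_ne' hy) _)
  refine sum_pos' (fun y _ => Real.rpow_nonneg (hterm y) _) ⟨y, mem_univ _, ?_⟩
  exact Real.rpow_pos_of_pos (hxy.trans_le (single_le_sum
    (fun x _ => mul_nonneg (hP.1 x) (Real.rpow_nonneg (hW x y) _)) (mem_univ x))) _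

end

theorem stmt1_general {X Y : Type*} [Fintype X] [Nonempty X] [Fintype Y]
    (W : X → Y → ℝ) (hW : ∀ x y, 0 ≤ W x y) (hW1 : ∀ x, ∑ y, W x y = 1)
    (ρ : ℝ) (hρ : 0 < ρ) (α : ℝ) (hα : α = 1 / (1 + ρ)) :
    ∃ (P : X → ℝ) (Q : Y → ℝ),
      (∀ x, 0 ≤ P x) ∧ (∑ x, P x = 1) ∧ (∀ y, 0 ≤ Q y) ∧ (∑ y, Q y = 1) ∧
      (∀ P' : X → ℝ, (∀ x, 0 ≤ P' x) → (∑ x, P' x = 1) →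
        ENNReal.ofReal (1 / ρ) *
            negLog (∑ y, (∑ x, P' x * W x y ^ α) ^ (1 / α)) ≤
          ENNReal.ofReal (1 / ρ) *
            negLog (∑ y, (∑ x, P x * W x y ^ α) ^ (1 / α))) ∧
      (∀ Q' : Y → ℝ, (∀ y, 0 ≤ Q' y) → (∑ y, Q' y = 1) →
        (⨆ x, renyiTerm α (∑ y, W x y ^ α * Q y ^ (1 - α))) ≤
          ⨆ x, renyiTerm α (∑ y, W x y ^ α * Q' y ^ (1 - α))) ∧
      ENNReal.ofReal (1 / ρ) *
          negLog (∑ y, (∑ x, P x * W x y ^ α) ^ (1 / α)) =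
        ⨆ x, renyiTerm α (∑ y, W x y ^ α * Q y ^ (1 - α)) := by
  classical
  have hα0 : 0 < α := hα ▸ by positivity
  have hα1 : α < 1 := by rw [hα, div_lt_one (by linarith)]; linarith
  have hA : ∀ x y, 0 ≤ W x y ^ α := fun x y => Real.rpow_nonneg (hW x y) α
  have hcont : Continuous fun P : X → ℝ => ∑ y, (∑ x, P x * W x y ^ α) ^ (1 / α) := by
    fun_prop (disch := positivity)
  obtain ⟨P, hP, hmin⟩ := (isCompact_stdSimplex ℝ X).exists_isMinOn
    ⟨_, single_mem_stdSimplex ℝ (Classical.arbitrary X)⟩ hcont.continuousOn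
  set F := ∑ y, (∑ x, P x * W x y ^ α) ^ (1 / α)
  have hF : 0 < F := sum_rpow_sum_mul_rpow_pos hW hW1 hP α _
  have ha : ∀ y, 0 ≤ ∑ x, P x * W x y ^ α := fun y =>
    sum_nonneg fun x _ => mul_nonneg (hP.1 x) (hA x y)
  set Q : Y → ℝ := fun y => (∑ x, P x * W x y ^ α) ^ (1 / α) / F
  have hQ : Q ∈ stdSimplex ℝ Y :=
    ⟨fun y => div_nonneg (Real.rpow_nonneg (ha y) _) hF.le, by rw [← sum_div, div_self hF.ne']⟩
  have hdual : ∀ x, F ^ α ≤ ∑ y, W x y ^ α * Q y ^ (1 - α) := fun x =>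
    rpow_le_sum_mul_rpow_div hα0.ne' ha hF
      (sum_rpow_le_sum_mul_rpow_of_isMinOn ((one_le_div hα0).2 hα1.le) hA hP hmin x)
  have hupper : (⨆ x, renyiTerm α (∑ y, W x y ^ α * Q y ^ (1 - α))) ≤ renyiTerm α (F ^ α) :=
    iSup_le fun x => renyiTerm_le_renyiTerm hα1 ((Real.rpow_pos_of_pos hF α).trans_le (hdual x))
      (hdual x)
  have hlower : ∀ Q' ∈ stdSimplex ℝ Y,
      renyiTerm α (F ^ α) ≤ ⨆ x, renyiTerm α (∑ y, W x y ^ α * Q' y ^ (1 - α)) := by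
    intro Q' hQ'
    obtain ⟨x, hx⟩ := exists_le_sum_mul_of_mem_stdSimplex hP
      fun x => ∑ y, W x y ^ α * Q' y ^ (1 - α)
    exact (renyiTerm_le_renyiTerm hα1 (Real.rpow_pos_of_pos hF α)
      (hx.trans (sum_mul_sum_mul_rpow_le hα0 hα1 hA hP.1 hQ'))).trans (le_iSup_of_le x le_rfl)
  refine ⟨P, Q, hP.1, hP.2, hQ.1, hQ.2, fun P' h0 h1 => ?_,
    fun Q' h0 h1 => hupper.trans (hlower Q' ⟨h0, h1⟩), ?_⟩
  · exact mul_le_mul_right (negLog_le_negLog hF (hmin ⟨h0, h1⟩)) _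
  · exact (renyiTerm_rpow hρ hα hF).symm.trans (le_antisymm (hlower Q hQ) hupper)

/-- Csiszár's identity: `E₀(ρ)/ρ = min_Q max_x D_α(W(·|x)‖Q)` with `α = 1/(1+ρ)`,
both extrema attained. Powers are `Real.rpow`, so `0 ^ α = 0` for `α ∈ (0,1)`. -/
theorem stmt1 {X Y : Type*} [Fintype X] [Nonempty X] [Fintype Y] [Nonempty Y]
    (W : X → Y → ℝ) (hW : ∀ x y, 0 ≤ W x y) (hW1 : ∀ x, ∑ y, W x y = 1)
    (ρ : ℝ) (hρ : 0 < ρ) (α : ℝ) (hα : α = 1 / (1 + ρ)) :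
    ∃ (P : X → ℝ) (Q : Y → ℝ),
      (∀ x, 0 ≤ P x) ∧ (∑ x, P x = 1) ∧ (∀ y, 0 ≤ Q y) ∧ (∑ y, Q y = 1) ∧
      (∀ P' : X → ℝ, (∀ x, 0 ≤ P' x) → (∑ x, P' x = 1) →
        ENNReal.ofReal (1 / ρ) *
            negLog (∑ y, (∑ x, P' x * W x y ^ α) ^ (1 / α)) ≤
          ENNReal.ofReal (1 / ρ) *
            negLog (∑ y, (∑ x, P x * W x y ^ α) ^ (1 / α))) ∧
      (∀ Q' : Y → ℝ, (∀ y, 0 ≤ Q' y) → (∑ y, Q' y = 1) →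
        (⨆ x, renyiTerm α (∑ y, W x y ^ α * Q y ^ (1 - α))) ≤
          ⨆ x, renyiTerm α (∑ y, W x y ^ α * Q' y ^ (1 - α))) ∧
      ENNReal.ofReal (1 / ρ) *
          negLog (∑ y, (∑ x, P x * W x y ^ α) ^ (1 / α)) =
        ⨆ x, renyiTerm α (∑ y, W x y ^ α * Q y ^ (1 - α)) :=
  stmt1_general W hW hW1 ρ hρ α hα
end

section
/- Let G be a graph on a nonempty finite vertex set X. Let d ≥ 1 and for each x ∈ X let U_x be a d×d complex Hermitian orthogonal-projection matrix (U_x² = U_x = U_x*), such that U_x · U_{x'} = 0 whenever x ≠ x' and {x, x'} is NOT an edge of G. Let F be a d×d density matrix and let t ≥ 0 be a real number with Tr(U_x F) ≥ e^{−t} for every x ∈ X. Then for every n ≥ 1 and every family of M sequences x₁, …, x_M ∈ Xⁿ with the property that for each pair m ≠ m' there is a coordinate i ∈ {1,…,n} with x_{m,i} ≠ x_{m',i} and {x_{m,i}, x_{m',i}} not an edge of G, one has M ≤ e^{n·t}. -/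
open scoped ComplexOrder

def IsDensityMatrix {d : ℕ} (A : Matrix (Fin d) (Fin d) ℂ) : Prop :=
  A.PosSemidef ∧ A.trace = 1

/-!
Codeword `m` yields the projector `V m = U (c m 0) ⊗ ⋯ ⊗ U (c m (n-1))`. Two codewords differ at a
coordinate where their symbols are distinct and non-adjacent, so the corresponding factors
multiply to zero and the `V m` are pairwise orthogonal. Their sum is then a projection, hence
`∑ m, Tr (V m F^⊗n) ≤ Tr F^⊗n = 1`, while each term equals `∏ i, Tr (U (c m i) F) ≥ e^(-n t)`.
-/

open Matrix Finset

namespace Matrix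

variable {ι l m n R : Type*} [Fintype ι]

def piKronecker [CommMonoid R] (A : ι → Matrix m n R) : Matrix (ι → m) (ι → n) R :=
  of fun a b => ∏ i, A i (a i) (b i)

lemma piKronecker_apply [CommMonoid R] (A : ι → Matrix m n R) (a : ι → m) (b : ι → n) :
    piKronecker A a b = ∏ i, A i (a i) (b i) := rfl

lemma piKronecker_mul [DecidableEq ι] [Fintype m] [CommSemiring R]
    (A : ι → Matrix l m R) (B : ι → Matrix m n R) :
    piKronecker A * piKronecker B = piKronecker fun i => A i * B i := by
  ext a b
  simp only [mul_apply, piKronecker_apply, ← prod_mul_distrib]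
  exact (Fintype.prod_sum fun i j => A i (a i) j * B i j (b i)).symm

lemma trace_piKronecker [DecidableEq ι] [Fintype m] [CommSemiring R] (A : ι → Matrix m m R) :
    (piKronecker A).trace = ∏ i, (A i).trace :=
  (Fintype.prod_sum fun i j => A i j j).symm

lemma conjTranspose_piKronecker [CommSemiring R] [StarRing R] (A : ι → Matrix m n R) :
    (piKronecker A)ᴴ = piKronecker fun i => (A i)ᴴ := by
  ext a b
  simp [piKronecker_apply, conjTranspose_apply]

lemma piKronecker_eq_zero [CommMonoidWithZero R] {A : ι → Matrix m n R} {i : ι} (h : A i = 0) :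
    piKronecker A = 0 := by
  ext a b
  exact prod_eq_zero (mem_univ i) (by simp [h])

end Matrix

namespace IsStarProjection

variable {ι R : Type*}

lemma sum [NonUnitalSemiring R] [StarRing R] {P : ι → R} (s : Finset ι)
    (hP : ∀ i, IsStarProjection (P i)) (horth : Pairwise fun i j => P i * P j = 0) :
    IsStarProjection (∑ i ∈ s, P i) := by
  classical
  induction s using Finset.induction_on with
  | empty => simp [IsStarProjection.zero]
  | insert a s ha ih =>
    rw [sum_insert ha]
    refine (hP a).add ih ?_
    rw [mul_sum]
    exact sum_eq_zero fun j hj => horth (ne_of_mem_of_not_mem hj ha).symm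

variable {𝕜 n : Type*} [RCLike 𝕜] [Fintype n]

lemma trace_mul_nonneg {P ρ : Matrix n n 𝕜} (hP : IsStarProjection P) (hρ : ρ.PosSemidef) :
    0 ≤ (P * ρ).trace := by
  have hPH : Pᴴ = P := hP.isSelfAdjoint
  have : (P * ρ).trace = (Pᴴ * ρ * P).trace := by
    rw [hPH, trace_mul_comm (P * ρ) P, ← mul_assoc, hP.isIdempotentElem.eq]
  exact this ▸ (hρ.conjTranspose_mul_mul_same P).trace_nonneg

lemma piKronecker [Fintype ι] [DecidableEq ι] {P : ι → Matrix n n 𝕜}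
    (hP : ∀ i, IsStarProjection (P i)) : IsStarProjection (Matrix.piKronecker P) where
  isIdempotentElem := by
    rw [IsIdempotentElem, piKronecker_mul]
    simp only [fun i => (hP i).isIdempotentElem.eq]
  isSelfAdjoint := by
    rw [IsSelfAdjoint, star_eq_conjTranspose, conjTranspose_piKronecker]
    exact congrArg Matrix.piKronecker (funext fun i => (hP i).isSelfAdjoint)

end IsStarProjection

open scoped MatrixOrder in
lemma Matrix.PosSemidef.piKronecker {ι 𝕜 n : Type*} [Fintype ι] [DecidableEq ι] [RCLike 𝕜]
    [Fintype n] [DecidableEq n] {A : ι → Matrix n n 𝕜} (hA : ∀ i, (A i).PosSemidef) :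
    (Matrix.piKronecker A).PosSemidef := by
  choose B hB using fun i => CStarAlgebra.nonneg_iff_eq_star_mul_self.mp (hA i).nonneg
  have : Matrix.piKronecker A = (Matrix.piKronecker B)ᴴ * Matrix.piKronecker B := by
    rw [conjTranspose_piKronecker, piKronecker_mul]
    exact congrArg Matrix.piKronecker (funext hB)
  rw [this]
  exact posSemidef_conjTranspose_mul_self _

lemma Matrix.PosSemidef.sum_trace_mul_le_trace {ι 𝕜 n : Type*} [Fintype ι] [RCLike 𝕜]
    [Fintype n] [DecidableEq n] {ρ : Matrix n n 𝕜} (hρ : ρ.PosSemidef) {P : ι → Matrix n n 𝕜}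
    (hP : ∀ i, IsStarProjection (P i)) (horth : Pairwise fun i j => P i * P j = 0) :
    ∑ i, (P i * ρ).trace ≤ ρ.trace := by
  have := (IsStarProjection.sum univ hP horth).one_sub.trace_mul_nonneg hρ
  rwa [sub_mul, one_mul, trace_sub, sum_mul, trace_sum, sub_nonneg] at this

lemma Complex.ofReal_le_of_le_re {r : ℝ} {z : ℂ} (hz : 0 ≤ z) (h : r ≤ z.re) : (r : ℂ) ≤ z :=
  le_def.mpr ⟨h, (nonneg_iff.mp hz).2⟩

theorem stmt6_general {X : Type*} (G : SimpleGraph X)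
    (d : ℕ) (U : X → Matrix (Fin d) (Fin d) ℂ)
    (hidem : ∀ x, U x * U x = U x) (hherm : ∀ x, (U x).IsHermitian)
    (horth : ∀ x x', x ≠ x' → ¬ G.Adj x x' → U x * U x' = 0)
    (F : Matrix (Fin d) (Fin d) ℂ) (hF : IsDensityMatrix F)
    (t : ℝ) (hval : ∀ x, Real.exp (-t) ≤ ((U x * F).trace.re))
    (n : ℕ) (M : ℕ) (c : Fin M → Fin n → X)
    (hcode : ∀ m m', m ≠ m' →
      ∃ i, c m i ≠ c m' i ∧ ¬ G.Adj (c m i) (c m' i)) :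
    (M : ℝ) ≤ Real.exp (n * t) := by
  have hU (x : X) : IsStarProjection (U x) := ⟨hidem x, hherm x⟩
  set ρ := piKronecker fun _ : Fin n => F
  set V := fun m => piKronecker fun i => U (c m i)
  have hVorth : Pairwise fun m m' => V m * V m' = 0 := fun m m' hne => by
    obtain ⟨i, hne, hnadj⟩ := hcode m m' hne
    exact (piKronecker_mul _ _).trans (piKronecker_eq_zero (horth _ _ hne hnadj))
  have hsum : ∑ m, (V m * ρ).trace ≤ 1 := by
    simpa [ρ, trace_piKronecker, hF.2] using (PosSemidef.piKronecker fun _ => hF.1)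
      |>.sum_trace_mul_le_trace (fun m => .piKronecker fun i => hU _) hVorth
  have hterm (m : Fin M) : ((Real.exp (-t) ^ n : ℝ) : ℂ) ≤ (V m * ρ).trace := by
    rw [piKronecker_mul, trace_piKronecker, Complex.ofReal_pow, ← Fin.prod_const]
    exact prod_le_prod (fun _ _ => by positivity) fun i _ =>
      Complex.ofReal_le_of_le_re ((hU _).trace_mul_nonneg hF.1) (hval _)
  have hM : ((M * Real.exp (-t) ^ n : ℝ) : ℂ) ≤ 1 :=
    calc ((M * Real.exp (-t) ^ n : ℝ) : ℂ) = ∑ _m : Fin M, ((Real.exp (-t) ^ n : ℝ) : ℂ) := by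
          simp
      _ ≤ 1 := (sum_le_sum fun m _ => hterm m).trans hsum
  rw [← Real.exp_nat_mul, mul_neg, Real.exp_neg, ← div_eq_mul_inv] at hM
  exact (div_le_one (Real.exp_pos _)).mp (mod_cast hM)

/-- Theorem 3 of the paper (quantitative form): if `{U_x}` is a projective
representation of the confusability graph `G` with handle `F` satisfying
`Tr(U_x F) ≥ e^{-t}`, then any zero-error code of block-length `n` has at most
`e^{n t}` codewords. -/
theorem stmt6 {X : Type*} [Fintype X] [Nonempty X] (G : SimpleGraph X)
    (d : ℕ) (hd : 1 ≤ d) (U : X → Matrix (Fin d) (Fin d) ℂ)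
    (hidem : ∀ x, U x * U x = U x) (hherm : ∀ x, (U x).IsHermitian)
    (horth : ∀ x x', x ≠ x' → ¬ G.Adj x x' → U x * U x' = 0)
    (F : Matrix (Fin d) (Fin d) ℂ) (hF : IsDensityMatrix F)
    (t : ℝ) (ht : 0 ≤ t) (hval : ∀ x, Real.exp (-t) ≤ ((U x * F).trace.re))
    (n : ℕ) (hn : 1 ≤ n) (M : ℕ) (c : Fin M → Fin n → X)
    (hcode : ∀ m m', m ≠ m' →
      ∃ i, c m i ≠ c m' i ∧ ¬ G.Adj (c m i) (c m' i)) :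
    (M : ℝ) ≤ Real.exp (n * t) :=
  stmt6_general G d U hidem hherm horth F hF t hval n M c hcode
end

section
/- Let G be a graph on a nonempty finite vertex set X. Let d ≥ 1 and for each x ∈ X let u_x ∈ ℂ^d be a unit vector such that ⟨u_x, u_{x'}⟩ = 0 whenever x ≠ x' and {x, x'} is NOT an edge of G. Let c ∈ ℂ^d be a unit vector and let t ≥ 0 be a real number with |⟨u_x, c⟩|² ≥ e^{−t} for every x ∈ X. Then for every n ≥ 1 and every family of M sequences x₁, …, x_M ∈ Xⁿ with the property that for each pair m ≠ m' there is a coordinate i ∈ {1,…,n} with x_{m,i} ≠ x_{m',i} and {x_{m,i}, x_{m',i}} not an edge of G, one has M ≤ e^{n·t}. -/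
/-!
The `n`-fold tensor powers `u_{x₁} ⊗ ⋯ ⊗ u_{xₙ}` of the codewords form an orthonormal family:
two distinct codewords differ at a non-adjacent pair of symbols in some coordinate, where the
factor `⟨u_x, u_{x'}⟩` vanishes. Each of them has squared overlap at least `e^{-nt}` with the unit
vector `c^{⊗n}`, so Bessel's inequality gives `M e^{-nt} ≤ 1`.
-/

open Finset

section TensorVec

variable {𝕜 : Type*} [RCLike 𝕜] {ι κ : Type*} [Fintype ι]

/-- The elementary tensor `⊗ᵢ aᵢ`, in coordinates `(𝕜^κ)^{⊗ι} ≃ 𝕜^(ι → κ)`. -/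
noncomputable def tensorVec (a : ι → EuclideanSpace 𝕜 κ) : EuclideanSpace 𝕜 (ι → κ) :=
  WithLp.toLp 2 fun f => ∏ i, a i (f i)

variable [DecidableEq ι] [Fintype κ]

theorem inner_tensorVec (a b : ι → EuclideanSpace 𝕜 κ) :
    inner 𝕜 (tensorVec a) (tensorVec b) = ∏ i, inner 𝕜 (a i) (b i) := by
  simp only [tensorVec, PiLp.inner_apply, RCLike.inner_apply, map_prod,
    prod_univ_sum, Fintype.piFinset_univ]
  exact sum_congr rfl fun f _ => prod_mul_distrib.symm

theorem norm_tensorVec (a : ι → EuclideanSpace 𝕜 κ) : ‖tensorVec a‖ = ∏ i, ‖a i‖ := by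
  have hsq : ‖tensorVec a‖ ^ 2 = (∏ i, ‖a i‖) ^ 2 := by
    rw [← prod_pow]
    exact_mod_cast (inner_self_eq_norm_sq_to_K (𝕜 := 𝕜) (tensorVec a)).symm.trans <|
      (inner_tensorVec a a).trans (prod_congr rfl fun i _ => inner_self_eq_norm_sq_to_K (a i))
  exact (pow_left_inj₀ (norm_nonneg _) (prod_nonneg fun i _ => norm_nonneg _)
    two_ne_zero).1 hsq

end TensorVec

theorem orthonormal_tensorVec_of_code {𝕜 X ι κ : Type*} [RCLike 𝕜] [Fintype ι] [DecidableEq ι]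
    [Fintype κ] {R : X → X → Prop} {u : X → EuclideanSpace 𝕜 κ} (hunit : ∀ x, ‖u x‖ = 1)
    (horth : ∀ x x', x ≠ x' → ¬ R x x' → inner 𝕜 (u x) (u x') = 0) {M : Type*}
    {c : M → ι → X} (hcode : ∀ m m', m ≠ m' → ∃ i, c m i ≠ c m' i ∧ ¬ R (c m i) (c m' i)) :
    Orthonormal 𝕜 fun m => tensorVec fun i => u (c m i) := by
  refine ⟨fun m => by simp [norm_tensorVec, hunit], fun m m' hne => ?_⟩
  obtain ⟨i, hi, hR⟩ := hcode m m' hne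
  rw [inner_tensorVec]
  exact prod_eq_zero (mem_univ i) (horth _ _ hi hR)

theorem card_mul_le_of_orthonormal {𝕜 E ι : Type*} [RCLike 𝕜] [NormedAddCommGroup E]
    [InnerProductSpace 𝕜 E] [Fintype ι] {v : ι → E} (hv : Orthonormal 𝕜 v) {w : E}
    (hw : ‖w‖ = 1) {δ : ℝ} (hδ : ∀ i, δ ≤ ‖inner 𝕜 (v i) w‖ ^ 2) :
    Fintype.card ι * δ ≤ 1 :=
  calc Fintype.card ι * δ = ∑ _i : ι, δ := by simp
    _ ≤ ∑ i, ‖inner 𝕜 (v i) w‖ ^ 2 := sum_le_sum fun i _ => hδ i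
    _ ≤ ‖w‖ ^ 2 := hv.sum_inner_products_le w
    _ = 1 := by rw [hw, one_pow]

theorem stmt7_general {X : Type*} [Fintype X] (G : SimpleGraph X)
    (d : ℕ) (u : X → EuclideanSpace ℂ (Fin d))
    (hunit : ∀ x, ‖u x‖ = 1)
    (horth : ∀ x x', x ≠ x' → ¬ G.Adj x x' → inner (𝕜 := ℂ) (u x) (u x') = 0)
    (c₀ : EuclideanSpace ℂ (Fin d)) (hc₀ : ‖c₀‖ = 1)
    (t : ℝ)
    (hval : ∀ x, Real.exp (-t) ≤ ‖inner (𝕜 := ℂ) (u x) c₀‖ ^ 2)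
    (n : ℕ) (M : ℕ) (c : Fin M → Fin n → X)
    (hcode : ∀ m m', m ≠ m' →
      ∃ i, c m i ≠ c m' i ∧ ¬ G.Adj (c m i) (c m' i)) :
    (M : ℝ) ≤ Real.exp (n * t) := by
  have hoverlap : ∀ m, Real.exp (-(n * t)) ≤
      ‖inner ℂ (tensorVec fun i => u (c m i)) (tensorVec fun _ : Fin n => c₀)‖ ^ 2 := by
    intro m
    calc Real.exp (-(n * t)) = ∏ _i : Fin n, Real.exp (-t) := by
          rw [prod_const, card_univ, Fintype.card_fin, ← Real.exp_nat_mul, mul_neg]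
      _ ≤ ∏ i, ‖inner ℂ (u (c m i)) c₀‖ ^ 2 :=
          prod_le_prod (fun _ _ => (Real.exp_pos _).le) fun i _ => hval (c m i)
      _ = _ := by rw [inner_tensorVec, norm_prod, prod_pow]
  have hC : ‖tensorVec fun _ : Fin n => c₀‖ = 1 := by simp [norm_tensorVec, hc₀]
  have hbessel := card_mul_le_of_orthonormal (orthonormal_tensorVec_of_code hunit horth hcode) hC
    hoverlap
  rw [Fintype.card_fin, Real.exp_neg, ← div_eq_mul_inv, div_le_one (Real.exp_pos _)] at hbessel
  exact hbessel

/-- Lovász's bound (quantitative form): if `{u_x}` is an orthonormal representation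
of the confusability graph `G` with handle `c₀` satisfying `|⟨u_x, c₀⟩|² ≥ e^{-t}`,
then any zero-error code of block-length `n` has at most `e^{n t}` codewords. -/
theorem stmt7 {X : Type*} [Fintype X] [Nonempty X] (G : SimpleGraph X)
    (d : ℕ) (hd : 1 ≤ d) (u : X → EuclideanSpace ℂ (Fin d))
    (hunit : ∀ x, ‖u x‖ = 1)
    (horth : ∀ x x', x ≠ x' → ¬ G.Adj x x' → inner (𝕜 := ℂ) (u x) (u x') = 0)
    (c₀ : EuclideanSpace ℂ (Fin d)) (hc₀ : ‖c₀‖ = 1)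
    (t : ℝ) (ht : 0 ≤ t)
    (hval : ∀ x, Real.exp (-t) ≤ ‖inner (𝕜 := ℂ) (u x) c₀‖ ^ 2)
    (n : ℕ) (hn : 1 ≤ n) (M : ℕ) (c : Fin M → Fin n → X)
    (hcode : ∀ m m', m ≠ m' →
      ∃ i, c m i ≠ c m' i ∧ ¬ G.Adj (c m i) (c m' i)) :
    (M : ℝ) ≤ Real.exp (n * t) :=
  stmt7_general G d u hunit horth c₀ hc₀ t hval n M c hcode
end

section
/- Let X be a nonempty finite set, let d ≥ 1, and for each x ∈ X let S_x be a d×d complex density matrix. For ρ > 0 let E_0(ρ) = max over probability distributions P on X of −log Tr[(∑_{x∈X} P(x) · S_x^{1/(1+ρ)})^{1+ρ}]. Then the limit lim_{ρ→∞} E_0(ρ)/ρ exists, is finite, and equals the minimum over all d×d density matrices F of max_{x∈X} (−log Tr(Π_x · F)), where Π_x denotes the orthogonal projection onto the range (support) of S_x, the minimum being attained and finite. -/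
open scoped ENNReal ComplexOrder

/-- Matrix power of a Hermitian matrix via the spectral functional calculus,
applying `t ↦ t ^ β` (`Real.rpow`, so `0 ^ β = 0` for `β ≠ 0`) to the eigenvalues.
Junk value `0` for non-Hermitian matrices. -/
noncomputable def matRpow {d : ℕ} (A : Matrix (Fin d) (Fin d) ℂ) (β : ℝ) :
    Matrix (Fin d) (Fin d) ℂ :=
  if hA : A.IsHermitian then
    (hA.eigenvectorUnitary : Matrix (Fin d) (Fin d) ℂ) *
      (Matrix.diagonal fun i => ((hA.eigenvalues i ^ β : ℝ) : ℂ)) *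
      star (hA.eigenvectorUnitary : Matrix (Fin d) (Fin d) ℂ)
  else 0

/-- Orthogonal projection onto the range (support) of a Hermitian matrix,
via the spectral decomposition. Junk value `0` for non-Hermitian matrices. -/
noncomputable def suppProj {d : ℕ} (A : Matrix (Fin d) (Fin d) ℂ) :
    Matrix (Fin d) (Fin d) ℂ :=
  if hA : A.IsHermitian then
    (hA.eigenvectorUnitary : Matrix (Fin d) (Fin d) ℂ) *
      (Matrix.diagonal fun i => if hA.eigenvalues i = 0 then (0 : ℂ) else 1) *
      star (hA.eigenvectorUnitary : Matrix (Fin d) (Fin d) ℂ)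
  else 0

/-- Gallager's function `E₀(ρ) = max_P -log Tr[(∑_x P(x) Sₓ^{1/(1+ρ)})^{1+ρ}]`
of a classical-quantum channel. -/
noncomputable def E0 {X : Type*} [Fintype X] {d : ℕ}
    (S : X → Matrix (Fin d) (Fin d) ℂ) (ρ : ℝ) : ℝ :=
  sSup {r : ℝ | ∃ P : X → ℝ, (∀ x, 0 ≤ P x) ∧ (∑ x, P x = 1) ∧
    r = -Real.log
      ((matRpow (∑ x, (P x : ℂ) • matRpow (S x) (1 / (1 + ρ))) (1 + ρ)).trace.re)}

/-!
Let `Πₓ` be the support projection of `Sₓ` and let `c > 0` bound every nonzero eigenvalue of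
every `Sₓ` from below. For `β = 1/(1+ρ)` the operator inequalities `c^β Πₓ ≤ Sₓ^β ≤ Πₓ`,
summed against an input distribution `P`, squeeze the largest eigenvalue of
`∑ P(x) Sₓ^β` between `c^β λ(P)` and `λ(P)`, where `λ(P)` is the largest eigenvalue of
`∑ P(x) Πₓ`. As `c^{β(1+ρ)} = c`, this gives
`c λ(P)^{1+ρ} ≤ Tr[(∑ P(x) Sₓ^β)^{1+ρ}] ≤ d λ(P)^{1+ρ}`, so
`E₀(ρ) = -(1+ρ) log min_P λ(P) + O(1)`.

Since `λ(P) = max_F ∑ P(x) Tr(Πₓ F)` over density matrices `F`, the minimax theorem for this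
bilinear payoff on (probability simplex) × (density matrices) gives a saddle point `(Q, F₀)`
whose value `v` equals both `min_P λ(P)` and `max_F min_x Tr(Πₓ F) = min_x Tr(Πₓ F₀)`.
-/

open scoped MatrixOrder ComplexOrder
open Matrix Filter Topology

theorem negLog_antitone : Antitone negLog := by
  intro r s hrs
  unfold negLog
  split_ifs with hs hr hr
  · exact le_rfl
  · exact absurd (hrs.trans hs) hr
  · exact le_top
  · exact ENNReal.ofReal_le_ofReal (neg_le_neg (Real.log_le_log (not_le.mp hr) hrs))

theorem negLog_of_pos {r : ℝ} (hr : 0 < r) : negLog r = ENNReal.ofReal (-Real.log r) :=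
  if_neg hr.not_ge

theorem iSup_negLog_le {ι : Type*} {t : ι → ℝ} {v : ℝ} (h : ∀ x, v ≤ t x) :
    ⨆ x, negLog (t x) ≤ negLog v :=
  iSup_le fun x => negLog_antitone (h x)

theorem negLog_le_iSup {ι : Type*} {t : ι → ℝ} {v : ℝ} (h : ∃ x, t x ≤ v) :
    negLog v ≤ ⨆ x, negLog (t x) :=
  let ⟨x, hx⟩ := h
  (negLog_antitone hx).trans (le_iSup (fun x => negLog (t x)) x)

theorem exists_isSaddlePointOn_of_bilinear {E F : Type*}
    [AddCommGroup E] [Module ℝ E] [TopologicalSpace E] [IsTopologicalAddGroup E]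
    [ContinuousSMul ℝ E] [T2Space E] [FiniteDimensional ℝ E]
    [AddCommGroup F] [Module ℝ F] [TopologicalSpace F] [IsTopologicalAddGroup F]
    [ContinuousSMul ℝ F] [T2Space F] [FiniteDimensional ℝ F]
    (B : E →ₗ[ℝ] F →ₗ[ℝ] ℝ) {K : Set E} {L : Set F}
    (hKne : K.Nonempty) (hKconv : Convex ℝ K) (hKcpt : IsCompact K)
    (hLne : L.Nonempty) (hLconv : Convex ℝ L) (hLcpt : IsCompact L) :
    ∃ a ∈ K, ∃ b ∈ L, IsSaddlePointOn K L (fun x y => B x y) a b :=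
  Sion.exists_isSaddlePointOn hKne hKconv hKcpt
    (fun y _ =>
      (B.flip y).continuous_of_finiteDimensional.lowerSemicontinuous.lowerSemicontinuousOn _)
    (fun y _ => ((B.flip y).convexOn hKconv).quasiconvexOn) hLconv hLne hLcpt
    (fun x _ =>
      (B x).continuous_of_finiteDimensional.upperSemicontinuous.upperSemicontinuousOn _)
    (fun x _ => ((B x).concaveOn hLconv).quasiconcaveOn)

theorem exists_le_of_sum_mul_le {ι : Type*} [Fintype ι] [Nonempty ι] {P t : ι → ℝ} {v : ℝ}
    (hP : P ∈ stdSimplex ℝ ι) (h : ∑ x, P x * t x ≤ v) : ∃ x, t x ≤ v := by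
  obtain ⟨x, -, hx⟩ := Finset.exists_mem_eq_inf' Finset.univ_nonempty t
  refine ⟨x, le_trans ?_ h⟩
  calc t x = ∑ y, P y * t x := by rw [← Finset.sum_mul, hP.2, one_mul]
    _ ≤ ∑ y, P y * t y := Finset.sum_le_sum fun y _ =>
      mul_le_mul_of_nonneg_left (hx ▸ Finset.inf'_le _ (Finset.mem_univ y)) (hP.1 y)

theorem Set.Finite.exists_pos_forall_le_of_pos {s : Set ℝ} (hs : s.Finite) :
    ∃ c > 0, ∀ t ∈ s, 0 < t → c ≤ t := by
  have h : ∀ᶠ c in 𝓝[>] (0 : ℝ), ∀ t ∈ s, 0 < t → c ≤ t :=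
    hs.eventually_all.2 fun t _ => by
      by_cases ht : 0 < t
      · filter_upwards [nhdsWithin_le_nhds (eventually_lt_nhds ht)] with c hc _ using hc.le
      · exact .of_forall fun _ h => absurd h ht
  obtain ⟨c, hc, hc0⟩ := (h.and self_mem_nhdsWithin).exists
  exact ⟨c, hc0, hc⟩

theorem tendsto_div_atTop_of_affine_bounds {f : ℝ → ℝ} {R a b : ℝ}
    (hlo : ∀ᶠ ρ in atTop, (1 + ρ) * R - a ≤ f ρ) (hhi : ∀ᶠ ρ in atTop, f ρ ≤ (1 + ρ) * R - b) :
    Tendsto (fun ρ => f ρ / ρ) atTop (𝓝 R) := by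
  have key (K : ℝ) : Tendsto (fun ρ : ℝ => ((1 + ρ) * R - K) / ρ) atTop (𝓝 R) := by
    have h := tendsto_const_nhds (x := R).add (tendsto_inv_atTop_zero.const_mul (R - K))
    rw [mul_zero, add_zero] at h
    refine h.congr' ?_
    filter_upwards [eventually_gt_atTop 0] with ρ hρ
    field_simp
    ring
  refine tendsto_of_tendsto_of_tendsto_of_le_of_le' (key a) (key b) ?_ ?_
  · filter_upwards [hlo, eventually_gt_atTop 0] with ρ h hρ
    exact div_le_div_of_nonneg_right h hρ.le
  · filter_upwards [hhi, eventually_gt_atTop 0] with ρ h hρ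
    exact div_le_div_of_nonneg_right h hρ.le

namespace Matrix

theorem PosSemidef.sum_smul {n ι : Type*} [Fintype ι] {T : ι → Matrix n n ℂ}
    (hT : ∀ x, (T x).PosSemidef) {P : ι → ℝ} (hP : ∀ x, 0 ≤ P x) :
    (∑ x, (P x : ℂ) • T x).PosSemidef :=
  posSemidef_sum _ fun x _ => (hT x).smul (Complex.zero_le_real.mpr (hP x))

def densityMatrices (n : Type*) [Fintype n] : Set (Matrix n n ℂ) :=
  {F | F.PosSemidef ∧ F.trace = 1}

variable {n : Type*} [Fintype n]

theorem isClosed_setOf_posSemidef : IsClosed {F : Matrix n n ℂ | F.PosSemidef} := by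
  simp only [posSemidef_iff_dotProduct_mulVec, Set.ofPred_and, Set.ofPred_forall]
  refine .inter (isClosed_eq (by fun_prop) continuous_id) (isClosed_iInter fun x => ?_)
  exact isClosed_le continuous_const (by fun_prop)

theorem convex_densityMatrices : Convex ℝ (densityMatrices n) := by
  rintro F ⟨hF0, hF1⟩ G ⟨hG0, hG1⟩ a b ha hb hab
  refine ⟨(hF0.smul ha).add (hG0.smul hb), ?_⟩
  rw [trace_add, trace_smul, trace_smul, hF1, hG1]
  simp [← Complex.ofReal_add, hab]

section Pairing

variable {ι : Type*} [Fintype ι]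

noncomputable def weightedTracePairing (T : ι → Matrix n n ℂ) :
    (ι → ℝ) →ₗ[ℝ] Matrix n n ℂ →ₗ[ℝ] ℝ :=
  LinearMap.mk₂ ℝ (fun P F => ∑ x, P x * (T x * F).trace.re)
    (fun P P' F => by simp only [Pi.add_apply, add_mul, Finset.sum_add_distrib])
    (fun r P F => by simp only [Pi.smul_apply, smul_eq_mul, mul_assoc, Finset.mul_sum])
    (fun P F F' => by
      simp only [trace_add, Complex.add_re, mul_add, Finset.sum_add_distrib])
    (fun r P F => by
      simp only [Matrix.mul_smul, trace_smul, Complex.smul_re, smul_eq_mul, Finset.mul_sum]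
      exact Finset.sum_congr rfl fun x _ => by ring)

theorem weightedTracePairing_apply (T : ι → Matrix n n ℂ) (P : ι → ℝ) (F : Matrix n n ℂ) :
    weightedTracePairing T P F = ((∑ x, (P x : ℂ) • T x) * F).trace.re := by
  simp only [weightedTracePairing, LinearMap.mk₂_apply, Finset.sum_mul, trace_sum,
    Complex.re_sum, smul_mul_assoc, trace_smul, smul_eq_mul, Complex.re_ofReal_mul]

variable {T : ι → Matrix n n ℂ} {Q : ι → ℝ} {F₀ : Matrix n n ℂ}

theorem le_re_trace_mul_of_isSaddlePointOn
    (hsad : IsSaddlePointOn (stdSimplex ℝ ι) (densityMatrices n)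
      (fun P F => weightedTracePairing T P F) Q F₀)
    (hF₀ : F₀ ∈ densityMatrices n) (x : ι) :
    weightedTracePairing T Q F₀ ≤ (T x * F₀).trace.re := by
  classical
  simpa [weightedTracePairing_apply] using hsad _ (single_mem_stdSimplex ℝ x) F₀ hF₀

theorem exists_re_trace_mul_le_of_isSaddlePointOn [Nonempty ι]
    (hsad : IsSaddlePointOn (stdSimplex ℝ ι) (densityMatrices n)
      (fun P F => weightedTracePairing T P F) Q F₀)
    (hQ : Q ∈ stdSimplex ℝ ι) {F : Matrix n n ℂ} (hF : F ∈ densityMatrices n) :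
    ∃ x, (T x * F).trace.re ≤ weightedTracePairing T Q F₀ :=
  exists_le_of_sum_mul_le hQ (hsad Q hQ F hF)

end Pairing

variable [DecidableEq n]

theorem re_trace_mul_nonneg {A B : Matrix n n ℂ} (hA : 0 ≤ A) (hB : 0 ≤ B) :
    0 ≤ (A * B).trace.re := by
  have hs := nonneg_iff_posSemidef.mp (CFC.sqrt_nonneg A)
  rw [← CFC.sqrt_mul_sqrt_self A, mul_assoc, trace_mul_comm, mul_assoc, ← mul_assoc]
  have := (nonneg_iff_posSemidef.mp hB).mul_mul_conjTranspose_same (CFC.sqrt A)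
  rw [hs.1.eq] at this
  exact (Complex.nonneg_iff.mp this.trace_nonneg).1

theorem re_trace_mul_le_of_le {A B F : Matrix n n ℂ} (h : A ≤ B) (hF : 0 ≤ F) :
    (A * F).trace.re ≤ (B * F).trace.re := by
  have := re_trace_mul_nonneg (sub_nonneg.mpr h) hF
  rwa [sub_mul, trace_sub, Complex.sub_re, sub_nonneg] at this

theorem trace_conjStarAlgAut (U : unitary (Matrix n n ℂ)) (B : Matrix n n ℂ) :
    (Unitary.conjStarAlgAut ℂ _ U B).trace = B.trace := by
  rw [Unitary.conjStarAlgAut_apply, trace_mul_cycle, Unitary.coe_star_mul_self, one_mul]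

theorem IsHermitian.re_trace_cfc {A : Matrix n n ℂ} (hA : A.IsHermitian) (f : ℝ → ℝ) :
    (cfc f A).trace.re = ∑ i, f (hA.eigenvalues i) := by
  rw [hA.cfc_eq, IsHermitian.cfc, trace_conjStarAlgAut, trace_diagonal, Complex.re_sum]
  rfl

theorem IsHermitian.sum_eigenvalues_eq_one {A : Matrix n n ℂ} (hA : A.IsHermitian)
    (hA1 : A.trace = 1) : ∑ i, hA.eigenvalues i = 1 := by
  have := hA.trace_eq_sum_eigenvalues
  rw [hA1] at this
  simpa using (congrArg RCLike.re this).symm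

theorem norm_apply_le_one_of_mem_densityMatrices {F : Matrix n n ℂ} (hF : F ∈ densityMatrices n)
    (i j : n) : ‖F i j‖ ≤ 1 := by
  obtain ⟨hF0, hF1⟩ := hF
  set U : Matrix n n ℂ := (hF0.1.eigenvectorUnitary : Matrix n n ℂ)
  have hU := hF0.1.eigenvectorUnitary.2
  have hentry : F i j = ∑ k, U i k * (hF0.1.eigenvalues k : ℂ) * star (U j k) := by
    conv_lhs => rw [hF0.1.spectral_theorem, Unitary.conjStarAlgAut_apply, mul_apply]
    simp [mul_diagonal, U]
  calc ‖F i j‖ ≤ ∑ k, ‖U i k * (hF0.1.eigenvalues k : ℂ) * star (U j k)‖ :=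
        hentry ▸ norm_sum_le _ _
    _ ≤ ∑ k, hF0.1.eigenvalues k := Finset.sum_le_sum fun k _ => by
        rw [norm_mul, norm_mul, norm_star, Complex.norm_real,
          Real.norm_of_nonneg (hF0.eigenvalues_nonneg k)]
        have := hF0.eigenvalues_nonneg k
        calc ‖U i k‖ * hF0.1.eigenvalues k * ‖U j k‖ ≤ 1 * hF0.1.eigenvalues k * 1 := by
              gcongr
              exacts [entry_norm_bound_of_unitary hU i k, entry_norm_bound_of_unitary hU j k]
          _ = hF0.1.eigenvalues k := by ring
    _ = 1 := hF0.1.sum_eigenvalues_eq_one hF1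

theorem isCompact_densityMatrices : IsCompact (densityMatrices n) := by
  refine (isCompact_univ_pi fun _ => isCompact_univ_pi fun _ =>
    isCompact_closedBall (0 : ℂ) 1).of_isClosed_subset ?_ fun F hF i _ j _ => ?_
  · exact isClosed_setOf_posSemidef.inter (isClosed_eq (by fun_prop) continuous_const)
  · simpa using norm_apply_le_one_of_mem_densityMatrices hF i j

theorem inv_card_smul_one_mem_densityMatrices [Nonempty n] :
    ((Fintype.card n : ℂ)⁻¹ • 1 : Matrix n n ℂ) ∈ densityMatrices n := by
  refine ⟨PosSemidef.one.smul (by positivity), ?_⟩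
  rw [trace_smul, trace_one, smul_eq_mul, inv_mul_cancel₀ (by simp)]

section LambdaMax

variable [Nonempty n] {A B : Matrix n n ℂ}

noncomputable def IsHermitian.lambdaMax (hA : A.IsHermitian) : ℝ :=
  Finset.univ.sup' Finset.univ_nonempty hA.eigenvalues

theorem IsHermitian.eigenvalues_le_lambdaMax (hA : A.IsHermitian) (i : n) :
    hA.eigenvalues i ≤ hA.lambdaMax :=
  Finset.le_sup' _ (Finset.mem_univ i)

theorem IsHermitian.exists_eigenvalues_eq_lambdaMax (hA : A.IsHermitian) :
    ∃ i, hA.eigenvalues i = hA.lambdaMax := by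
  obtain ⟨i, -, hi⟩ := Finset.exists_mem_eq_sup' Finset.univ_nonempty hA.eigenvalues
  exact ⟨i, hi.symm⟩

theorem IsHermitian.le_lambdaMax_smul_one (hA : A.IsHermitian) :
    A ≤ (hA.lambdaMax : ℂ) • 1 := by
  have : A ≤ algebraMap ℝ (Matrix n n ℂ) hA.lambdaMax := by
    refine le_algebraMap_of_spectrum_le (fun t ht => ?_) hA.isSelfAdjoint
    obtain ⟨i, rfl⟩ := hA.spectrum_real_eq_range_eigenvalues ▸ ht
    exact hA.eigenvalues_le_lambdaMax i
  rwa [Algebra.algebraMap_eq_smul_one, ← Complex.coe_smul] at this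

theorem IsHermitian.re_trace_mul_le_lambdaMax (hA : A.IsHermitian) {F : Matrix n n ℂ}
    (hF : F ∈ densityMatrices n) : (A * F).trace.re ≤ hA.lambdaMax := by
  have := re_trace_mul_le_of_le hA.le_lambdaMax_smul_one hF.1.nonneg
  rwa [smul_mul_assoc, one_mul, trace_smul, hF.2, smul_eq_mul, mul_one,
    Complex.ofReal_re] at this

theorem IsHermitian.exists_re_trace_mul_eq_lambdaMax (hA : A.IsHermitian) :
    ∃ F ∈ densityMatrices n, (A * F).trace.re = hA.lambdaMax := by
  obtain ⟨i, hi⟩ := hA.exists_eigenvalues_eq_lambdaMax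
  set E : Matrix n n ℂ := diagonal (Pi.single i 1)
  have hE : E.PosSemidef := PosSemidef.diagonal fun j => by
    rcases eq_or_ne j i with rfl | h <;> simp [*]
  refine ⟨Unitary.conjStarAlgAut ℂ _ hA.eigenvectorUnitary E, ⟨?_, ?_⟩, ?_⟩
  · rw [Unitary.conjStarAlgAut_apply, star_eq_conjTranspose]
    exact hE.mul_mul_conjTranspose_same _
  · rw [trace_conjStarAlgAut, trace_diagonal, Finset.sum_pi_single']
    simp
  · have hAF : A * Unitary.conjStarAlgAut ℂ _ hA.eigenvectorUnitary E =
        Unitary.conjStarAlgAut ℂ _ hA.eigenvectorUnitary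
          (diagonal (RCLike.ofReal ∘ hA.eigenvalues) * E) := by
      rw [map_mul, ← hA.spectral_theorem]
    rw [hAF, trace_conjStarAlgAut, diagonal_mul_diagonal, trace_diagonal]
    simp [Pi.single_apply, hi]

theorem IsHermitian.mul_lambdaMax_le_of_smul_le (hA : A.IsHermitian) (hB : B.IsHermitian)
    {c : ℝ} (h : (c : ℂ) • A ≤ B) : c * hA.lambdaMax ≤ hB.lambdaMax := by
  obtain ⟨F, hF, hAF⟩ := hA.exists_re_trace_mul_eq_lambdaMax
  calc c * hA.lambdaMax = (((c : ℂ) • A) * F).trace.re := by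
        rw [smul_mul_assoc, trace_smul, smul_eq_mul, Complex.re_ofReal_mul, hAF]
    _ ≤ (B * F).trace.re := re_trace_mul_le_of_le h hF.1.nonneg
    _ ≤ hB.lambdaMax := hB.re_trace_mul_le_lambdaMax hF

theorem IsHermitian.lambdaMax_le_of_le (hA : A.IsHermitian) (hB : B.IsHermitian) (h : A ≤ B) :
    hA.lambdaMax ≤ hB.lambdaMax := by
  simpa using hA.mul_lambdaMax_le_of_smul_le hB (c := 1) (by simpa using h)

theorem PosSemidef.lambdaMax_rpow_le_re_trace_cfc_rpow (hA : A.PosSemidef) (γ : ℝ) :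
    hA.1.lambdaMax ^ γ ≤ (cfc (fun t : ℝ => t ^ γ) A).trace.re := by
  obtain ⟨i, hi⟩ := hA.1.exists_eigenvalues_eq_lambdaMax
  rw [hA.1.re_trace_cfc, ← hi]
  exact Finset.single_le_sum (fun j _ => Real.rpow_nonneg (hA.eigenvalues_nonneg j) γ)
    (Finset.mem_univ i)

theorem PosSemidef.re_trace_cfc_rpow_le (hA : A.PosSemidef) {γ : ℝ} (hγ : 0 ≤ γ) :
    (cfc (fun t : ℝ => t ^ γ) A).trace.re ≤ Fintype.card n * hA.1.lambdaMax ^ γ := by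
  rw [hA.1.re_trace_cfc, ← nsmul_eq_mul, ← Finset.card_univ, ← Finset.sum_const]
  exact Finset.sum_le_sum fun i _ =>
    Real.rpow_le_rpow (hA.eigenvalues_nonneg i) (hA.1.eigenvalues_le_lambdaMax i) hγ

end LambdaMax

section Game

variable {ι : Type*} [Fintype ι] {T : ι → Matrix n n ℂ} {Q : ι → ℝ} {F₀ : Matrix n n ℂ}

theorem le_lambdaMax_of_isSaddlePointOn [Nonempty n]
    (hsad : IsSaddlePointOn (stdSimplex ℝ ι) (densityMatrices n)
      (fun P F => weightedTracePairing T P F) Q F₀)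
    (hF₀ : F₀ ∈ densityMatrices n) {P : ι → ℝ} (hP : P ∈ stdSimplex ℝ ι)
    (hN : (∑ x, (P x : ℂ) • T x).IsHermitian) :
    weightedTracePairing T Q F₀ ≤ hN.lambdaMax := by
  refine (hsad P hP F₀ hF₀).trans ?_
  simpa only [weightedTracePairing_apply] using hN.re_trace_mul_le_lambdaMax hF₀

theorem lambdaMax_le_of_isSaddlePointOn [Nonempty n]
    (hsad : IsSaddlePointOn (stdSimplex ℝ ι) (densityMatrices n)
      (fun P F => weightedTracePairing T P F) Q F₀)
    (hQ : Q ∈ stdSimplex ℝ ι) (hN : (∑ x, (Q x : ℂ) • T x).IsHermitian) :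
    hN.lambdaMax ≤ weightedTracePairing T Q F₀ := by
  obtain ⟨F, hF, hNF⟩ := hN.exists_re_trace_mul_eq_lambdaMax
  rw [← hNF, ← weightedTracePairing_apply]
  exact hsad Q hQ F hF

theorem pos_of_isSaddlePointOn [Nonempty n]
    (hsad : IsSaddlePointOn (stdSimplex ℝ ι) (densityMatrices n)
      (fun P F => weightedTracePairing T P F) Q F₀)
    (hQ : Q ∈ stdSimplex ℝ ι) (hT : ∀ x, 1 ≤ (T x).trace.re) :
    0 < weightedTracePairing T Q F₀ := by
  refine lt_of_lt_of_le ?_ (hsad Q hQ _ inv_card_smul_one_mem_densityMatrices)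
  have hcard : (0 : ℝ) < (Fintype.card n : ℝ)⁻¹ := by positivity
  calc (0 : ℝ) < (Fintype.card n : ℝ)⁻¹ * ∑ x, Q x * 1 := by
        rwa [← Finset.sum_mul, hQ.2, mul_one, mul_one]
    _ ≤ (Fintype.card n : ℝ)⁻¹ * ∑ x, Q x * (T x).trace.re := by
        gcongr with x
        exacts [hQ.1 x, hT x]
    _ = _ := by
        simp only [weightedTracePairing, LinearMap.mk₂_apply, mul_smul_comm, mul_one,
          trace_smul, smul_eq_mul, Finset.mul_sum]
        refine Finset.sum_congr rfl fun x _ => ?_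
        rw [← Complex.ofReal_natCast, ← Complex.ofReal_inv, Complex.re_ofReal_mul]
        ring

end Game

end Matrix

section Channel

variable {d : ℕ}

theorem matRpow_eq_cfc {A : Matrix (Fin d) (Fin d) ℂ} (hA : A.IsHermitian) (β : ℝ) :
    matRpow A β = cfc (fun t : ℝ => t ^ β) A := by
  rw [matRpow, dif_pos hA, hA.cfc_eq, IsHermitian.cfc, Unitary.conjStarAlgAut_apply]
  rfl

theorem suppProj_eq_cfc {A : Matrix (Fin d) (Fin d) ℂ} (hA : A.IsHermitian) :
    suppProj A = cfc (fun t : ℝ => if t = 0 then 0 else 1) A := by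
  rw [suppProj, dif_pos hA, hA.cfc_eq, IsHermitian.cfc, Unitary.conjStarAlgAut_apply]
  congr 3
  ext i
  split_ifs <;> simp [*]

theorem IsDensityMatrix.spectrum_subset_Icc {S : Matrix (Fin d) (Fin d) ℂ}
    (hS : IsDensityMatrix S) : spectrum ℝ S ⊆ Set.Icc 0 1 := by
  obtain ⟨hS0, hS1⟩ := hS
  rintro t ht
  obtain ⟨i, rfl⟩ := hS0.1.spectrum_real_eq_range_eigenvalues ▸ ht
  refine ⟨hS0.eigenvalues_nonneg i, hS0.1.sum_eigenvalues_eq_one hS1 ▸ ?_⟩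
  exact Finset.single_le_sum (fun j _ => hS0.eigenvalues_nonneg j) (Finset.mem_univ i)

theorem IsDensityMatrix.matRpow_nonneg {S : Matrix (Fin d) (Fin d) ℂ} (hS : IsDensityMatrix S)
    (β : ℝ) : 0 ≤ matRpow S β := by
  rw [matRpow_eq_cfc hS.1.1]
  exact cfc_nonneg fun t ht => Real.rpow_nonneg (hS.spectrum_subset_Icc ht).1 β

theorem IsDensityMatrix.suppProj_nonneg {S : Matrix (Fin d) (Fin d) ℂ} (hS : IsDensityMatrix S) :
    0 ≤ suppProj S := by
  rw [suppProj_eq_cfc hS.1.1]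
  exact cfc_nonneg fun t _ => by split_ifs <;> norm_num

theorem IsDensityMatrix.matRpow_le_suppProj {S : Matrix (Fin d) (Fin d) ℂ}
    (hS : IsDensityMatrix S) {β : ℝ} (hβ : 0 < β) : matRpow S β ≤ suppProj S := by
  rw [matRpow_eq_cfc hS.1.1, suppProj_eq_cfc hS.1.1]
  refine cfc_mono (fun t ht => ?_) (hf := S.finite_real_spectrum.continuousOn _)
    (hg := S.finite_real_spectrum.continuousOn _)
  obtain ⟨ht0, ht1⟩ := hS.spectrum_subset_Icc ht
  split_ifs with h
  · simp [h, hβ.ne']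
  · exact Real.rpow_le_one ht0 ht1 hβ.le

theorem IsDensityMatrix.smul_suppProj_le_matRpow {S : Matrix (Fin d) (Fin d) ℂ}
    (hS : IsDensityMatrix S) {c : ℝ} (hc : 0 < c) (hcS : ∀ t ∈ spectrum ℝ S, 0 < t → c ≤ t)
    {β : ℝ} (hβ : 0 < β) : ((c ^ β : ℝ) : ℂ) • suppProj S ≤ matRpow S β := by
  rw [matRpow_eq_cfc hS.1.1, suppProj_eq_cfc hS.1.1, Complex.coe_smul,
    ← cfc_const_mul _ _ _ (S.finite_real_spectrum.continuousOn _)]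
  refine cfc_mono (fun t ht => ?_) (hf := S.finite_real_spectrum.continuousOn _)
    (hg := S.finite_real_spectrum.continuousOn _)
  split_ifs with h
  · simp [h, hβ.ne']
  · rw [mul_one]
    exact Real.rpow_le_rpow hc.le
      (hcS t ht (lt_of_le_of_ne (hS.spectrum_subset_Icc ht).1 (Ne.symm h))) hβ.le

theorem IsDensityMatrix.one_le_re_trace_suppProj {S : Matrix (Fin d) (Fin d) ℂ}
    (hS : IsDensityMatrix S) : 1 ≤ (suppProj S).trace.re := by
  rw [suppProj_eq_cfc hS.1.1, hS.1.1.re_trace_cfc]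
  refine (hS.1.1.sum_eigenvalues_eq_one hS.2).symm.le.trans (Finset.sum_le_sum fun i _ => ?_)
  split_ifs with h
  · exact h.le
  · exact (hS.spectrum_subset_Icc (hS.1.1.eigenvalues_mem_spectrum_real i)).2

variable {X : Type*} [Fintype X] {S : X → Matrix (Fin d) (Fin d) ℂ}

theorem sum_smul_matRpow_le_sum_smul_suppProj (hS : ∀ x, IsDensityMatrix (S x))
    {P : X → ℝ} (hP : ∀ x, 0 ≤ P x) {β : ℝ} (hβ : 0 < β) :
    ∑ x, (P x : ℂ) • matRpow (S x) β ≤ ∑ x, (P x : ℂ) • suppProj (S x) :=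
  Finset.sum_le_sum fun x _ => smul_le_smul_of_nonneg_left ((hS x).matRpow_le_suppProj hβ)
    (Complex.zero_le_real.mpr (hP x))

theorem smul_sum_smul_suppProj_le_sum_smul_matRpow (hS : ∀ x, IsDensityMatrix (S x))
    {c : ℝ} (hc : 0 < c) (hcS : ∀ x, ∀ t ∈ spectrum ℝ (S x), 0 < t → c ≤ t)
    {P : X → ℝ} (hP : ∀ x, 0 ≤ P x) {β : ℝ} (hβ : 0 < β) :
    ((c ^ β : ℝ) : ℂ) • ∑ x, (P x : ℂ) • suppProj (S x) ≤
      ∑ x, (P x : ℂ) • matRpow (S x) β := by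
  rw [Finset.smul_sum]
  refine Finset.sum_le_sum fun x _ => ?_
  rw [smul_comm]
  exact smul_le_smul_of_nonneg_left ((hS x).smul_suppProj_le_matRpow hc (hcS x) hβ)
    (Complex.zero_le_real.mpr (hP x))

theorem isHermitian_sum_smul_suppProj (hS : ∀ x, IsDensityMatrix (S x)) (P : X → ℝ) :
    (∑ x, (P x : ℂ) • suppProj (S x)).IsHermitian :=
  isSelfAdjoint_sum _ fun x _ =>
    IsSelfAdjoint.smul (Complex.conj_ofReal (P x))
      (nonneg_iff_posSemidef.mp (hS x).suppProj_nonneg).1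

noncomputable def gallagerTrace (S : X → Matrix (Fin d) (Fin d) ℂ) (ρ : ℝ) (P : X → ℝ) : ℝ :=
  (matRpow (∑ x, (P x : ℂ) • matRpow (S x) (1 / (1 + ρ))) (1 + ρ)).trace.re

theorem E0_eq_sSup_image (S : X → Matrix (Fin d) (Fin d) ℂ) (ρ : ℝ) :
    E0 S ρ = sSup ((fun P => -Real.log (gallagerTrace S ρ P)) '' stdSimplex ℝ X) := by
  simp only [E0, gallagerTrace, Set.image, stdSimplex, Set.mem_ofPred_eq, and_assoc, eq_comm]

variable [NeZero d]

theorem gallagerTrace_mem_Icc (hS : ∀ x, IsDensityMatrix (S x))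
    {c : ℝ} (hc : 0 < c) (hcS : ∀ x, ∀ t ∈ spectrum ℝ (S x), 0 < t → c ≤ t)
    {P : X → ℝ} (hP : ∀ x, 0 ≤ P x)
    (hNpos : 0 < (isHermitian_sum_smul_suppProj hS P).lambdaMax) {ρ : ℝ} (hρ : 0 ≤ ρ) :
    gallagerTrace S ρ P ∈ Set.Icc (c * (isHermitian_sum_smul_suppProj hS P).lambdaMax ^ (1 + ρ))
      (d * (isHermitian_sum_smul_suppProj hS P).lambdaMax ^ (1 + ρ)) := by
  set hN := isHermitian_sum_smul_suppProj hS P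
  set β := 1 / (1 + ρ) with hβ_def
  have hβ : 0 < β := by positivity
  have hM : (∑ x, (P x : ℂ) • matRpow (S x) β).PosSemidef :=
    PosSemidef.sum_smul (fun x => nonneg_iff_posSemidef.mp ((hS x).matRpow_nonneg β)) hP
  have hlo : c ^ β * hN.lambdaMax ≤ hM.1.lambdaMax :=
    hN.mul_lambdaMax_le_of_smul_le hM.1
      (smul_sum_smul_suppProj_le_sum_smul_matRpow hS hc hcS hP hβ)
  have hhi : hM.1.lambdaMax ≤ hN.lambdaMax :=
    hM.1.lambdaMax_le_of_le hN (sum_smul_matRpow_le_sum_smul_suppProj hS hP hβ)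
  have hMpos : 0 < hM.1.lambdaMax := (mul_pos (Real.rpow_pos_of_pos hc β) hNpos).trans_le hlo
  rw [gallagerTrace, ← hβ_def, matRpow_eq_cfc hM.1]
  constructor
  · calc c * hN.lambdaMax ^ (1 + ρ) = (c ^ β * hN.lambdaMax) ^ (1 + ρ) := by
          rw [Real.mul_rpow (by positivity) hNpos.le, ← Real.rpow_mul hc.le,
            one_div_mul_cancel (by positivity), Real.rpow_one]
      _ ≤ hM.1.lambdaMax ^ (1 + ρ) := Real.rpow_le_rpow (by positivity) hlo (by positivity)
      _ ≤ _ := hM.lambdaMax_rpow_le_re_trace_cfc_rpow _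
  · calc _ ≤ Fintype.card (Fin d) * hM.1.lambdaMax ^ (1 + ρ) :=
          hM.re_trace_cfc_rpow_le (by positivity)
      _ ≤ d * hN.lambdaMax ^ (1 + ρ) := by
          rw [Fintype.card_fin]
          exact mul_le_mul_of_nonneg_left (Real.rpow_le_rpow hMpos.le hhi (by positivity))
            (Nat.cast_nonneg d)

theorem neg_log_mul_rpow {a v : ℝ} (ha : 0 < a) (hv : 0 < v) (γ : ℝ) :
    -Real.log (a * v ^ γ) = γ * -Real.log v - Real.log a := by
  rw [Real.log_mul ha.ne' (Real.rpow_pos_of_pos hv γ).ne', Real.log_rpow hv]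
  ring

theorem E0_mem_Icc [Nonempty X] (hS : ∀ x, IsDensityMatrix (S x))
    {c : ℝ} (hc : 0 < c) (hcS : ∀ x, ∀ t ∈ spectrum ℝ (S x), 0 < t → c ≤ t)
    {v : ℝ} (hv : 0 < v)
    (hvP : ∀ P ∈ stdSimplex ℝ X, v ≤ (isHermitian_sum_smul_suppProj hS P).lambdaMax)
    {Q : X → ℝ} (hQ : Q ∈ stdSimplex ℝ X)
    (hQv : (isHermitian_sum_smul_suppProj hS Q).lambdaMax ≤ v) {ρ : ℝ} (hρ : 0 ≤ ρ) :
    E0 S ρ ∈ Set.Icc ((1 + ρ) * -Real.log v - Real.log d)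
      ((1 + ρ) * -Real.log v - Real.log c) := by
  have hd : (0 : ℝ) < d := by exact_mod_cast NeZero.pos d
  have hbounds {P} (hP : P ∈ stdSimplex ℝ X) :=
    gallagerTrace_mem_Icc hS hc hcS hP.1 (hv.trans_le (hvP P hP)) hρ
  have hupper (P) (hP : P ∈ stdSimplex ℝ X) :
      -Real.log (gallagerTrace S ρ P) ≤ (1 + ρ) * -Real.log v - Real.log c := by
    rw [← neg_log_mul_rpow hc hv]
    refine neg_le_neg (Real.log_le_log (by positivity) (le_trans ?_ (hbounds hP).1))
    gcongr
    exact hvP P hP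
  have hlower : (1 + ρ) * -Real.log v - Real.log d ≤ -Real.log (gallagerTrace S ρ Q) := by
    rw [← neg_log_mul_rpow hd hv]
    have hQpos := hv.trans_le (hvP Q hQ)
    have hpos : 0 < gallagerTrace S ρ Q := lt_of_lt_of_le (by positivity) (hbounds hQ).1
    refine neg_le_neg (Real.log_le_log hpos ((hbounds hQ).2.trans ?_))
    gcongr
  rw [E0_eq_sSup_image]
  classical
  obtain ⟨x⟩ := ‹Nonempty X›
  exact ⟨hlower.trans
      (le_csSup ⟨_, Set.forall_mem_image.2 hupper⟩ (Set.mem_image_of_mem _ hQ)),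
    csSup_le ⟨_, Set.mem_image_of_mem _ (single_mem_stdSimplex ℝ x)⟩
      (Set.forall_mem_image.2 hupper)⟩

end Channel

/-- Equation (31) of the paper: `R_∞ = lim_{ρ→∞} E₀(ρ)/ρ` exists, is finite,
and equals `min_F max_x -log Tr(Πₓ F)`, where `Πₓ` projects onto the support
of `Sₓ`; the minimum is attained and finite. -/
theorem stmt8 {X : Type*} [Fintype X] [Nonempty X] (d : ℕ) (hd : 1 ≤ d)
    (S : X → Matrix (Fin d) (Fin d) ℂ) (hS : ∀ x, IsDensityMatrix (S x)) :
    ∃ F : Matrix (Fin d) (Fin d) ℂ, IsDensityMatrix F ∧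
      (∀ F' : Matrix (Fin d) (Fin d) ℂ, IsDensityMatrix F' →
        (⨆ x, negLog ((suppProj (S x) * F).trace.re)) ≤
          ⨆ x, negLog ((suppProj (S x) * F').trace.re)) ∧
      (⨆ x, negLog ((suppProj (S x) * F).trace.re)) ≠ ⊤ ∧
      Filter.Tendsto (fun ρ : ℝ => ENNReal.ofReal (E0 S ρ / ρ)) Filter.atTop
        (nhds (⨆ x, negLog ((suppProj (S x) * F).trace.re))) := by
  classical
  have : NeZero d := ⟨by omega⟩
  obtain ⟨c, hc, hcS⟩ :=
    (Set.finite_iUnion fun x => (S x).finite_real_spectrum).exists_pos_forall_le_of_pos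
  obtain ⟨Q, hQ, F₀, hF₀, hsad⟩ :=
    exists_isSaddlePointOn_of_bilinear (weightedTracePairing fun x => suppProj (S x))
      ⟨_, single_mem_stdSimplex ℝ (Classical.arbitrary X)⟩ (convex_stdSimplex ℝ X)
      (isCompact_stdSimplex ℝ X) ⟨_, inv_card_smul_one_mem_densityMatrices⟩
      convex_densityMatrices isCompact_densityMatrices
  set v := weightedTracePairing (fun x => suppProj (S x)) Q F₀
  have hv : 0 < v := pos_of_isSaddlePointOn hsad hQ fun x => (hS x).one_le_re_trace_suppProj
  have hvalue : ⨆ x, negLog ((suppProj (S x) * F₀).trace.re) = negLog v :=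
    le_antisymm (iSup_negLog_le (le_re_trace_mul_of_isSaddlePointOn hsad hF₀))
      (negLog_le_iSup (exists_re_trace_mul_le_of_isSaddlePointOn hsad hQ hF₀))
  refine ⟨F₀, hF₀, fun F hF => ?_, ?_, ?_⟩ <;> rw [hvalue]
  · exact negLog_le_iSup (exists_re_trace_mul_le_of_isSaddlePointOn hsad hQ hF)
  · exact negLog_of_pos hv ▸ ENNReal.ofReal_ne_top
  · have hE0 : ∀ᶠ ρ in atTop, E0 S ρ ∈ Set.Icc ((1 + ρ) * -Real.log v - Real.log d)
        ((1 + ρ) * -Real.log v - Real.log c) := by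
      filter_upwards [eventually_ge_atTop 0] with ρ hρ
      exact E0_mem_Icc hS hc (fun x t ht => hcS t (Set.mem_iUnion_of_mem x ht)) hv
        (fun P hP => le_lambdaMax_of_isSaddlePointOn hsad hF₀ hP _) hQ
        (lambdaMax_le_of_isSaddlePointOn hsad hQ _) hρ
    rw [negLog_of_pos hv]
    exact ENNReal.tendsto_ofReal (tendsto_div_atTop_of_affine_bounds
      (hE0.mono fun _ h => h.1) (hE0.mono fun _ h => h.2))
end
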